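/- Let n ≥ 3 be an integer, x ≥ 0 a real number, and a_0(n), a_1(n) real sequences. Then the first central moment satisfies V_{n,1}((t−x); x) = (1/(n−2))·(1+2x)(3a_0(n) − 2a_1(n)), where the operator is applied to the function t ↦ t − x. -/

import Mathlib

open MeasureTheory Filter Topology

/-- Baskakov basis function `p_{n,k}(x) = C(n+k-1, k) x^k / (1+x)^{n+k}`. -/
noncomputable def bask (n k : ℕ) (x : ℝ) : ℝ :=
  (Nat.choose (n + k - 1) k : ℝ) * x ^ k / (1 + x) ^ (n + k)

/-- Modified basis `p^1_{n,k}(x) = a(x,n) p_{n+1,k}(x) + b(x,n) p_{n+1,k-1}(x)`,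
with `p_{n+1,-1} = 0`. -/
noncomputable def p1 (a0 a1 : ℕ → ℝ) (n k : ℕ) (x : ℝ) : ℝ :=
  (a0 n + a1 n * x) * bask (n + 1) k x
    + (a0 n - a1 n * (1 + x)) * (if k = 0 then 0 else bask (n + 1) (k - 1) x)

/-- First-order modified Baskakov–Durrmeyer operator. -/
noncomputable def V1 (a0 a1 : ℕ → ℝ) (n : ℕ) (f : ℝ → ℝ) (x : ℝ) : ℝ :=
  ((n : ℝ) - 1) * ∑' k : ℕ, p1 a0 a1 n k x * ∫ t in Set.Ioi (0 : ℝ), bask n k t * f t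

/-!
Two facts about the Baskakov basis carry the computation. First, `∫₀^∞ p_{n+2,k} = 1/(n+1)` for
every `k`: the derivative identity `p'_{n+1,k} = (n+1) (p_{n+2,k-1} - p_{n+2,k})` telescopes, so
`-(1/(n+1)) ∑_{j ≤ k} p_{n+1,j}` is an antiderivative of `p_{n+2,k}` vanishing at infinity and equal
to `-1/(n+1)` at `0`. Second, `t p_{n+2,k}(t) = (k+1)/(n+1) p_{n+1,k+1}(t)`; it turns the first
moment of `p_{n,k}` into a zeroth moment, and together with the negative binomial series
`∑_k p_{n+1,k}(x) = 1` it gives `∑_k k p_{n+1,k}(x) = (n+1) x`. Hence `∫₀^∞ p_{n,k}(t) (t - x) dt` is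
affine in `k`, and summing it against `p^1_{n,k}(x)` (a combination of `p_{n+1,k}` and its shift) is
explicit.
-/

open Set

lemma bask_succ (n k : ℕ) :
    bask (n + 1) k = fun t => ((n + k).choose k : ℝ) * t ^ k / (1 + t) ^ (n + k + 1) := by
  funext t; rw [bask, show n + 1 + k - 1 = n + k by omega, add_right_comm]

lemma bask_nonneg (n k : ℕ) {t : ℝ} (ht : 0 ≤ t) : 0 ≤ bask n k t := by
  unfold bask; positivity

lemma sum_range_bask_zero (n k : ℕ) : ∑ j ∈ Finset.range (k + 1), bask n j 0 = 1 := by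
  rw [Finset.sum_range_succ']
  simp [bask]

lemma tendsto_bask_atTop (n k : ℕ) : Tendsto (bask (n + 1) k) atTop (𝓝 0) := by
  have h1t : Tendsto (fun t : ℝ => 1 + t) atTop atTop :=
    tendsto_atTop_add_const_left _ 1 tendsto_id
  have hbound : Tendsto (fun t : ℝ => ((n + k).choose k : ℝ) / (1 + t) ^ (n + 1)) atTop (𝓝 0) :=
    tendsto_const_nhds.div_atTop ((tendsto_pow_atTop (by omega)).comp h1t)
  refine squeeze_zero' ?_ ?_ hbound
  · filter_upwards [eventually_ge_atTop 0] with t ht using bask_nonneg _ _ ht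
  · filter_upwards [eventually_ge_atTop 0] with t ht
    simp only [bask_succ, mul_div_assoc]
    refine mul_le_mul_of_nonneg_left ?_ (by positivity)
    rw [div_le_iff₀ (by positivity), show n + k + 1 = n + 1 + k by ring,
      pow_add (1 + t) (n + 1), inv_mul_cancel_left₀ (by positivity)]
    exact pow_le_pow_left₀ ht (by linarith) k

lemma cast_choose_succ_mul (n k : ℕ) :
    ((n + k + 1).choose (k + 1) : ℝ) * (k + 1) = (n + k + 1).choose k * (n + 1) := by
  exact_mod_cast (Nat.choose_succ_right_eq (n + k + 1) k).trans (by congr 1; omega)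

lemma hasDerivAt_bask_zero (n : ℕ) {t : ℝ} (ht : 1 + t ≠ 0) :
    HasDerivAt (bask (n + 1) 0) (-((n + 1) * bask (n + 2) 0 t)) t := by
  rw [bask_succ]
  refine (((hasDerivAt_const t _).const_mul _).fun_div
    (((hasDerivAt_id t).const_add 1).fun_pow _) (pow_ne_zero _ ht)).congr_deriv ?_
  simp only [bask_succ, id, Nat.choose_zero_right, Nat.add_sub_cancel, pow_succ _ (n + 0 + 1)]
  push_cast
  field_simp
  ring

lemma hasDerivAt_bask_succ (n k : ℕ) {t : ℝ} (ht : 1 + t ≠ 0) :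
    HasDerivAt (bask (n + 1) (k + 1))
      ((n + 1) * (bask (n + 2) k t - bask (n + 2) (k + 1) t)) t := by
  have c1 := cast_choose_succ_mul n k
  have c2 : ((n + k + 1).choose (k + 1) : ℝ) * (n + k + 2)
      = (n + k + 2).choose (k + 1) * (n + 1) := by
    exact_mod_cast (Nat.choose_mul_succ_eq (n + k + 1) (k + 1)).trans (by congr 1; omega)
  rw [bask_succ]
  refine (((hasDerivAt_pow _ t).const_mul _).fun_div
    (((hasDerivAt_id t).const_add 1).fun_pow _) (pow_ne_zero _ ht)).congr_deriv ?_
  simp only [bask_succ, id, show n + 1 + k = n + k + 1 by omega,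
    show n + 1 + (k + 1) = n + k + 2 by omega, show n + (k + 1) = n + k + 1 by omega,
    Nat.add_sub_cancel, pow_succ _ (n + k + 1), pow_succ _ (n + k + 1 + 1), pow_succ t k]
  push_cast
  have hP : (1 + t) ^ (n + k + 1) ≠ 0 := pow_ne_zero _ ht
  generalize (1 + t) ^ (n + k + 1) = P at hP ⊢
  field_simp
  linear_combination t ^ k * (1 + t) * c1 - t ^ k * t * c2

lemma hasDerivAt_sum_range_bask (n k : ℕ) {t : ℝ} (ht : 1 + t ≠ 0) :
    HasDerivAt (fun s => ∑ j ∈ Finset.range (k + 1), bask (n + 1) j s)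
      (-((n + 1) * bask (n + 2) k t)) t := by
  induction k with
  | zero => simpa using hasDerivAt_bask_zero n ht
  | succ k ih =>
    simp only [Finset.sum_range_succ _ (k + 1)]
    exact (ih.fun_add (hasDerivAt_bask_succ n k ht)).congr_deriv (by ring)

lemma integrableOn_bask_and_integral_eq (n k : ℕ) :
    IntegrableOn (bask (n + 2) k) (Ioi 0) ∧
      ∫ t in Ioi (0 : ℝ), bask (n + 2) k t = 1 / (n + 1) := by
  set F : ℝ → ℝ := fun s => -(∑ j ∈ Finset.range (k + 1), bask (n + 1) j s) / (n + 1)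
  have hderiv : ∀ t ∈ Ici (0 : ℝ), HasDerivAt F (bask (n + 2) k t) t := by
    intro t ht
    have h1t : 1 + t ≠ 0 := by simp only [Set.mem_Ici] at ht; positivity
    exact ((hasDerivAt_sum_range_bask n k h1t).fun_neg.div_const (n + 1 : ℝ)).congr_deriv
      (by field_simp)
  have hpos : ∀ t ∈ Ioi (0 : ℝ), 0 ≤ bask (n + 2) k t := fun t ht => bask_nonneg _ _ ht.le
  have hlim : Tendsto F atTop (𝓝 0) := by
    simpa using
      (tendsto_finsetSum _ fun j _ => tendsto_bask_atTop n j).neg.div_const (n + 1 : ℝ)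
  refine ⟨integrableOn_Ioi_deriv_of_nonneg' hderiv hpos hlim, ?_⟩
  rw [integral_Ioi_of_hasDerivAt_of_nonneg' hderiv hpos hlim]
  simp only [F, sum_range_bask_zero, zero_sub, one_div]
  ring

lemma mul_bask (n k : ℕ) (t : ℝ) :
    t * bask (n + 2) k t = (k + 1) / (n + 1) * bask (n + 1) (k + 1) t := by
  have c1 := cast_choose_succ_mul n k
  simp only [bask_succ, show n + 1 + k = n + k + 1 by omega,
    show n + (k + 1) = n + k + 1 by omega, div_eq_mul_inv]
  generalize ((1 + t) ^ (n + k + 1 + 1))⁻¹ = Q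
  field_simp
  linear_combination -(t * t ^ k * Q) * c1

lemma integral_bask_mul_sub (n k : ℕ) (x : ℝ) :
    ∫ t in Ioi (0 : ℝ), bask (n + 3) k t * (t - x)
      = (k + 1) / ((n + 1) * (n + 2)) - x / (n + 2) := by
  have hsplit : (fun t => bask (n + 3) k t * (t - x))
      = fun t => (k + 1) / (n + 2) * bask (n + 2) (k + 1) t - x * bask (n + 3) k t := by
    funext t
    rw [mul_sub, mul_comm, mul_bask (n + 1)]
    push_cast
    ring
  obtain ⟨hint₁, hval₁⟩ := integrableOn_bask_and_integral_eq n (k + 1)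
  obtain ⟨hint₂, hval₂⟩ := integrableOn_bask_and_integral_eq (n + 1) k
  rw [hsplit, integral_sub (hint₁.const_mul _) (hint₂.const_mul _), integral_const_mul,
    integral_const_mul, hval₁, hval₂]
  push_cast
  field_simp
  ring

lemma hasSum_bask (n : ℕ) {x : ℝ} (hx : 0 ≤ x) : HasSum (fun k => bask (n + 1) k x) 1 := by
  have hne : 1 + x ≠ 0 := by positivity
  have hr : ‖x / (1 + x)‖ < 1 := by
    rw [Real.norm_eq_abs, abs_of_nonneg (by positivity), div_lt_one (by positivity)]
    linarith
  have h := (hasSum_choose_mul_geometric_of_norm_lt_one (𝕜 := ℝ) n hr).div_const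
    ((1 + x) ^ (n + 1))
  rw [one_sub_div hne, add_sub_cancel_right, one_div_pow, one_div_one_div,
    div_self (pow_ne_zero _ hne)] at h
  refine h.congr_fun fun k => ?_
  simp only [bask_succ, add_comm n k, Nat.choose_symm_add, div_pow]
  rw [add_assoc, pow_add]
  field_simp

lemma hasSum_natCast_mul_bask (n : ℕ) {x : ℝ} (hx : 0 ≤ x) :
    HasSum (fun k : ℕ => (k : ℝ) * bask (n + 1) k x) ((n + 1) * x) := by
  rw [← hasSum_nat_add_iff' 1, Finset.sum_range_one, Nat.cast_zero, zero_mul, sub_zero]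
  have h := (hasSum_bask (n + 1) hx).mul_left ((n + 1) * x)
  rw [mul_one] at h
  refine h.congr_fun fun k => ?_
  rw [mul_assoc, mul_bask]
  push_cast
  field_simp

lemma hasSum_bask_mul_affine (n : ℕ) {x : ℝ} (hx : 0 ≤ x) (α γ : ℝ) :
    HasSum (fun k : ℕ => bask (n + 1) k x * (α * k + γ)) (α * ((n + 1) * x) + γ) := by
  have h := ((hasSum_natCast_mul_bask n hx).mul_left α).add ((hasSum_bask n hx).mul_left γ)
  rw [mul_one] at h
  exact h.congr_fun fun k => by ring

lemma hasSum_p1_mul_affine (a0 a1 : ℕ → ℝ) (n : ℕ) {x : ℝ} (hx : 0 ≤ x) (α γ : ℝ) :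
    HasSum (fun k : ℕ => p1 a0 a1 n k x * (α * k + γ))
      ((a0 n + a1 n * x) * (α * ((n + 1) * x) + γ)
        + (a0 n - a1 n * (1 + x)) * (α * ((n + 1) * x) + (α + γ))) := by
  have hshift : HasSum (fun k : ℕ => (if k = 0 then 0 else bask (n + 1) (k - 1) x) * (α * k + γ))
      (α * ((n + 1) * x) + (α + γ)) := by
    rw [← hasSum_nat_add_iff' 1, Finset.sum_range_one, if_pos rfl, zero_mul, sub_zero]
    refine (hasSum_bask_mul_affine n hx α (α + γ)).congr_fun fun k => ?_
    simp only [Nat.add_one_ne_zero, if_false, Nat.add_sub_cancel]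
    push_cast
    ring
  refine (((hasSum_bask_mul_affine n hx α γ).mul_left _).add (hshift.mul_left _)).congr_fun
    fun k => ?_
  simp only [p1]
  ring

theorem V1_central_moment_one (n : ℕ) (hn : 3 ≤ n) (x : ℝ) (hx : 0 ≤ x) (a0 a1 : ℕ → ℝ) :
    V1 a0 a1 n (fun t => t - x) x =
      (1 / ((n : ℝ) - 2)) * ((1 + 2 * x) * (3 * a0 n - 2 * a1 n)) := by
  obtain ⟨N, rfl⟩ : ∃ N, n = N + 3 := ⟨n - 3, by omega⟩
  have hmoment : ∀ k : ℕ, ∫ t in Ioi (0 : ℝ), bask (N + 3) k t * (t - x)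
      = 1 / ((N + 1) * (N + 2)) * k + (1 / ((N + 1) * (N + 2)) - x / (N + 2)) := by
    intro k
    rw [integral_bask_mul_sub]
    ring
  have hcast₁ : ((N + 3 : ℕ) : ℝ) - 1 = N + 2 := by push_cast; ring
  have hcast₂ : ((N + 3 : ℕ) : ℝ) - 2 = N + 1 := by push_cast; ring
  simp only [V1, hmoment, (hasSum_p1_mul_affine a0 a1 (N + 3) hx _ _).tsum_eq, hcast₁, hcast₂]
  push_cast
  field_simp
  ring
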